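/- Let (Y, d_Y) be a compact geodesic metric space, M > 0, d_ℓ the induced length metric on X_M = Y × (0, M], and ω ∈ X_M a basepoint. Let x_i = (p_i, s_i) and y_i = (q_i, t_i) be sequences in X_M with s_i → 0, t_i → 0, p_i → a in Y and q_i → b in Y. Then (x_i, y_i)_ω → ∞ as i → ∞ if and only if a = b. -/

import Mathlib

open Set

/-- The Balogh–Schramm distance on `Y × (0, ∞)`:
`ρ((p,s),(q,t)) = 2·log((d_Y(p,q) + max(s,t))/√(s·t))`. -/
noncomputable def BS {Y : Type*} [MetricSpace Y] (x y : Y × ℝ) : ℝ :=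
  2 * Real.log ((dist x.1 y.1 + max x.2 y.2) / Real.sqrt (x.2 * y.2))

/-- Length of the map `γ` over the set `S` with respect to the distance
function `d`: the supremum over finite monotone partitions in `S` of the sums
of consecutive distances (as in Mathlib's `eVariationOn`). -/
noncomputable def lengthOn {X : Type*} (d : X → X → ℝ) (γ : ℝ → X) (S : Set ℝ) : ENNReal :=
  ⨆ p : ℕ × { u : ℕ → ℝ // Monotone u ∧ ∀ i, u i ∈ S },
    ∑ i ∈ Finset.range p.1, ENNReal.ofReal (d (γ (p.2.1 i)) (γ (p.2.1 (i + 1))))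

/-- Membership in `X_M = Y × (0, M]`. -/
def inXM {Y : Type*} (M : ℝ) (x : Y × ℝ) : Prop := 0 < x.2 ∧ x.2 ≤ M

/-- The induced length metric on `X_M = Y × (0, M]`: the infimum of
Balogh–Schramm lengths of continuous paths joining `x` and `y` inside `X_M`. -/
noncomputable def dLen {Y : Type*} [MetricSpace Y] (M : ℝ) (x y : Y × ℝ) : ℝ :=
  (sInf {L : ENNReal | ∃ (a b : ℝ) (γ : ℝ → Y × ℝ), a ≤ b ∧
      ContinuousOn γ (Icc a b) ∧ γ a = x ∧ γ b = y ∧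
      (∀ t ∈ Icc a b, inXM M (γ t)) ∧
      lengthOn (BS (Y := Y)) γ (Icc a b) = L}).toReal

/-- A metric space is geodesic: any two points are joined by an isometric
embedding of `[0, dist p q]`. -/
def GeodesicSpace (Y : Type*) [MetricSpace Y] : Prop :=
  ∀ p q : Y, ∃ α : ℝ → Y, α 0 = p ∧ α (dist p q) = q ∧
    ∀ s ∈ Icc (0:ℝ) (dist p q), ∀ t ∈ Icc (0:ℝ) (dist p q), dist (α s) (α t) = |s - t|

/-- The Gromov product `(x,y)_ω` with respect to the length metric `dLen M`. -/
noncomputable def gromovProd {Y : Type*} [MetricSpace Y] (M : ℝ) (ω x y : Y × ℝ) : ℝ :=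
  (dLen M x ω + dLen M y ω - dLen M x y) / 2

/-!
Both directions rest on two estimates for the length metric `d_ℓ`. From below, `ρ ≤ d_ℓ`,
since `ρ(x, y)` is the sum over the one-step partition of any path from `x` to `y`. From above,
for every height `h` with `s, t ≤ h ≤ M`, the path that rises from `(p, s)` to height `h`,
follows a geodesic of `Y` at that height and descends to `(q, t)` has length at most
`2 log h - log s - log t + 2 d_Y(p, q) / h`, the same bound that `ρ` itself satisfies.

If `a ≠ b`, taking `h = M` for the distances to `ω` gives
`(x_i, y_i)_ω ≤ C - log d_Y(p_i, q_i)`, which stays bounded. If `a = b`, taking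
`h_i = max (d_Y(p_i, q_i), s_i, t_i) → 0` gives
`(x_i, y_i)_ω ≥ log ω.2 - log h_i - 1 → ∞`.
-/

open Real

section BaloghSchramm

variable {Y : Type*} [MetricSpace Y] {x y : Y × ℝ}

theorem BS_eq_two_mul_log_sub (hx : 0 < x.2) (hy : 0 < y.2) :
    BS x y = 2 * log (dist x.1 y.1 + max x.2 y.2) - log x.2 - log y.2 := by
  have hnum : 0 < dist x.1 y.1 + max x.2 y.2 :=
    add_pos_of_nonneg_of_pos dist_nonneg (lt_max_of_lt_left hx)
  rw [BS, log_div hnum.ne' (sqrt_pos.2 (mul_pos hx hy)).ne', log_sqrt (mul_pos hx hy).le,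
    log_mul hx.ne' hy.ne']
  ring

theorem two_mul_log_sub_le_BS (hx : 0 < x.2) (hy : 0 < y.2) {r : ℝ} (hr : 0 < r)
    (hr' : r ≤ dist x.1 y.1 + max x.2 y.2) :
    2 * log r - log x.2 - log y.2 ≤ BS x y := by
  rw [BS_eq_two_mul_log_sub hx hy]
  have := log_le_log hr hr'
  linarith

theorem BS_le_of_le (hx : 0 < x.2) (hy : 0 < y.2) {h : ℝ} (hxh : x.2 ≤ h) (hyh : y.2 ≤ h) :
    BS x y ≤ 2 * log h - log x.2 - log y.2 + 2 * dist x.1 y.1 / h := by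
  have hh : 0 < h := hx.trans_le hxh
  have hlog : log (dist x.1 y.1 + h) ≤ log h + dist x.1 y.1 / h := by
    rw [show dist x.1 y.1 + h = h * (1 + dist x.1 y.1 / h) by field_simp; ring,
      log_mul hh.ne' (by positivity)]
    linarith [log_le_sub_one_of_pos (x := 1 + dist x.1 y.1 / h) (by positivity)]
  have := log_le_log (add_pos_of_nonneg_of_pos dist_nonneg (lt_max_of_lt_left hx))
    (add_le_add_right (max_le hxh hyh) (dist x.1 y.1))
  rw [BS_eq_two_mul_log_sub hx hy, mul_div_assoc]
  linarith

theorem BS_of_dist_eq_zero (hx : 0 < x.2) (hy : 0 < y.2) (hxy : dist x.1 y.1 = 0) :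
    BS x y = |log x.2 - log y.2| := by
  rw [BS_eq_two_mul_log_sub hx hy, hxy, zero_add]
  rcases le_total x.2 y.2 with hle | hle
  · rw [max_eq_right hle, abs_of_nonpos (by linarith [log_le_log hx hle])]; ring
  · rw [max_eq_left hle, abs_of_nonneg (by linarith [log_le_log hy hle])]; ring

end BaloghSchramm

section LengthOn

variable {X : Type*} (d : X → X → ℝ) (γ : ℝ → X) {a b : ℝ}

theorem ofReal_le_lengthOn_Icc (hab : a ≤ b) :
    ENNReal.ofReal (d (γ a) (γ b)) ≤ lengthOn d γ (Icc a b) := by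
  let u : ℕ → ℝ := fun i => if i = 0 then a else b
  have hu : Monotone u := by
    intro i j hij
    simp only [u]
    split_ifs <;> first | exact le_rfl | exact hab | omega
  have hmem : ∀ i, u i ∈ Icc a b := fun i => by
    simp only [u]; split_ifs
    exacts [left_mem_Icc.2 hab, right_mem_Icc.2 hab]
  have := le_iSup (fun p : ℕ × { u : ℕ → ℝ // Monotone u ∧ ∀ i, u i ∈ Icc a b } =>
      ∑ i ∈ Finset.range p.1, ENNReal.ofReal (d (γ (p.2.1 i)) (γ (p.2.1 (i + 1)))))
    (1, ⟨u, hu, hmem⟩)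
  simpa [lengthOn, u] using this

theorem lengthOn_Icc_le_of_le_sub {F : ℝ → ℝ} (hF : MonotoneOn F (Icc a b))
    (hd : ∀ u ∈ Icc a b, ∀ v ∈ Icc a b, u ≤ v → d (γ u) (γ v) ≤ F v - F u) :
    lengthOn d γ (Icc a b) ≤ ENNReal.ofReal (F b - F a) := by
  refine iSup_le fun ⟨n, u, hu, hmem⟩ => ?_
  have hstep : ∀ i, F (u i) ≤ F (u (i + 1)) := fun i =>
    hF (hmem i) (hmem (i + 1)) (hu i.le_succ)
  calc ∑ i ∈ Finset.range n, ENNReal.ofReal (d (γ (u i)) (γ (u (i + 1))))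
      ≤ ∑ i ∈ Finset.range n, ENNReal.ofReal (F (u (i + 1)) - F (u i)) :=
        Finset.sum_le_sum fun i _ => ENNReal.ofReal_le_ofReal
          (hd _ (hmem i) _ (hmem (i + 1)) (hu i.le_succ))
    _ = ENNReal.ofReal (F (u n) - F (u 0)) := by
        rw [← ENNReal.ofReal_sum_of_nonneg fun i _ => sub_nonneg.2 (hstep i),
          Finset.sum_range_sub (fun i => F (u i))]
    _ ≤ ENNReal.ofReal (F b - F a) := by
        refine ENNReal.ofReal_le_ofReal (sub_le_sub ?_ ?_)
        · exact hF (hmem n) (right_mem_Icc.2 ((hmem 0).1.trans (hmem 0).2)) (hmem n).2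
        · exact hF (left_mem_Icc.2 ((hmem 0).1.trans (hmem 0).2)) (hmem 0) (hmem 0).1

end LengthOn

section PathLengths

variable {Y : Type*} [MetricSpace Y] {M : ℝ} {x y : Y × ℝ} {L : ENNReal}

def pathLengths (M : ℝ) (x y : Y × ℝ) : Set ENNReal :=
  {L : ENNReal | ∃ (a b : ℝ) (γ : ℝ → Y × ℝ), a ≤ b ∧
      ContinuousOn γ (Icc a b) ∧ γ a = x ∧ γ b = y ∧
      (∀ t ∈ Icc a b, inXM M (γ t)) ∧
      lengthOn (BS (Y := Y)) γ (Icc a b) = L}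

theorem dLen_eq_toReal_sInf_pathLengths (M : ℝ) (x y : Y × ℝ) :
    dLen M x y = (sInf (pathLengths M x y)).toReal := rfl

theorem ofReal_BS_le_of_mem_pathLengths (hL : L ∈ pathLengths M x y) :
    ENNReal.ofReal (BS x y) ≤ L := by
  obtain ⟨a, b, γ, hab, -, rfl, rfl, -, rfl⟩ := hL
  exact ofReal_le_lengthOn_Icc _ γ hab

theorem dLen_le_of_mem_pathLengths (hL : L ∈ pathLengths M x y) {B : ℝ}
    (hLB : L ≤ ENNReal.ofReal B) (hB : 0 ≤ B) : dLen M x y ≤ B := by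
  rw [dLen_eq_toReal_sInf_pathLengths, ← ENNReal.toReal_ofReal hB]
  exact ENNReal.toReal_mono ENNReal.ofReal_ne_top ((sInf_le hL).trans hLB)

theorem BS_le_dLen_of_mem_pathLengths (hL : L ∈ pathLengths M x y) (hLtop : L ≠ ⊤) :
    BS x y ≤ dLen M x y := by
  rw [dLen_eq_toReal_sInf_pathLengths]
  calc BS x y ≤ (ENNReal.ofReal (BS x y)).toReal := by
        rw [ENNReal.toReal_ofReal']; exact le_max_left _ _
    _ ≤ (sInf (pathLengths M x y)).toReal :=
        ENNReal.toReal_mono (ne_top_of_le_ne_top hLtop (sInf_le hL))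
          (le_sInf fun _ hL' => ofReal_BS_le_of_mem_pathLengths hL')

end PathLengths

noncomputable section BSPath

variable {Y : Type*} {α : ℝ → Y} {d h u v : ℝ} (hd : 0 ≤ d)

/-- Rises through the heights `h e^u` for `u ≤ 0`, follows `α` at height `h` for `u ∈ [0, d]`,
then descends through the heights `h e^(d - u)` for `u ≥ d`. -/
def bsPath (α : ℝ → Y) (h u : ℝ) : Y × ℝ :=
  (α (projIcc 0 d hd u), h * exp (-|u - projIcc 0 d hd u|))

/-- The vertical parts of `bsPath` have unit speed in log-height, and a horizontal step of
length `δ` at height `h` costs at most `2 δ / h`. -/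
def bsPathBound (h u : ℝ) : ℝ :=
  u + (2 / h - 1) * projIcc 0 d hd u

theorem bsPath_of_nonpos (hu : u ≤ 0) : bsPath hd α h u = (α 0, h * exp u) := by
  simp [bsPath, projIcc_of_le_left hd hu, abs_of_nonpos hu]

theorem bsPath_of_le (hu : d ≤ u) : bsPath hd α h u = (α d, h * exp (d - u)) := by
  simp [bsPath, projIcc_of_right_le hd hu, abs_of_nonneg (sub_nonneg.2 hu)]

theorem bsPath_snd_pos (hh : 0 < h) : 0 < (bsPath hd α h u).2 :=
  mul_pos hh (exp_pos _)

theorem bsPath_snd_le (hh : 0 ≤ h) : (bsPath hd α h u).2 ≤ h :=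
  mul_le_of_le_one_right hh (exp_le_one_iff.2 (neg_nonpos.2 (abs_nonneg _)))

theorem log_bsPath_snd (hh : 0 < h) :
    log (bsPath hd α h u).2 = log h - |u - projIcc 0 d hd u| := by
  rw [bsPath, log_mul hh.ne' (exp_pos _).ne', log_exp]
  ring

theorem continuous_bsPath [TopologicalSpace Y] (hα : ContinuousOn α (Icc 0 d)) :
    Continuous (bsPath hd α h) := by
  have hc : Continuous fun u => (projIcc 0 d hd u : ℝ) :=
    continuous_subtype_val.comp continuous_projIcc
  exact (hα.comp_continuous hc fun u => (projIcc 0 d hd u).2).prodMk (by fun_prop)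

theorem monotone_bsPathBound (hh : 0 < h) : Monotone (bsPathBound hd h) := by
  intro u v huv
  have hc : (projIcc 0 d hd u : ℝ) ≤ projIcc 0 d hd v := monotone_projIcc hd huv
  have hlip : (projIcc 0 d hd v : ℝ) - projIcc 0 d hd u ≤ v - u :=
    (le_abs_self _).trans
      ((abs_projIcc_sub_projIcc hd).trans (abs_of_nonneg (sub_nonneg.2 huv)).le)
  have : 0 ≤ 2 / h * ((projIcc 0 d hd v : ℝ) - projIcc 0 d hd u) :=
    mul_nonneg (by positivity) (sub_nonneg.2 hc)
  simp only [bsPathBound]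
  linarith

theorem BS_bsPath_le [MetricSpace Y]
    (hα : ∀ s ∈ Icc 0 d, ∀ t ∈ Icc 0 d, dist (α s) (α t) = |s - t|) (hh : 0 < h)
    (huv : u ≤ v) :
    BS (bsPath hd α h u) (bsPath hd α h v) ≤ bsPathBound hd h v - bsPathBound hd h u := by
  set cu : ℝ := (projIcc 0 d hd u : ℝ) with hcu
  set cv : ℝ := (projIcc 0 d hd v : ℝ) with hcv
  have hc : cu ≤ cv := monotone_projIcc hd huv
  have hdist : dist (bsPath hd α h u).1 (bsPath hd α h v).1 = cv - cu := by
    rw [bsPath, bsPath, hα _ (projIcc 0 d hd u).2 _ (projIcc 0 d hd v).2, ← hcu, ← hcv,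
      abs_sub_comm, abs_of_nonneg (sub_nonneg.2 hc)]
  have hpos : ∀ w, 0 < (bsPath hd α h w).2 := fun _ => bsPath_snd_pos hd hh
  simp only [bsPathBound, ← hcu, ← hcv]
  rcases hc.eq_or_lt with heq | hlt
  · rw [BS_of_dist_eq_zero (hpos u) (hpos v) (by rw [hdist, heq, sub_self]),
      log_bsPath_snd hd hh, log_bsPath_snd hd hh, ← hcu, ← hcv, ← heq,
      sub_sub_sub_cancel_left]
    calc _ ≤ |(v - cu) - (u - cu)| := abs_abs_sub_abs_le_abs_sub _ _
      _ = _ := by rw [abs_of_nonneg (by linarith)]; ring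
  · have hu : u ≤ cu := by
      rcases le_total u d with hud | hdu
      · exact le_max_of_le_right (le_min hud le_rfl)
      · have := hlt.trans_le (projIcc 0 d hd v).2.2
        rw [hcu, projIcc_of_right_le hd hdu] at this
        exact absurd this (lt_irrefl d)
    have hv : cv ≤ v := by
      rcases le_total v 0 with hv0 | hv0
      · have := (projIcc 0 d hd u).2.1.trans_lt hlt
        rw [hcv, projIcc_of_le_left hd hv0] at this
        exact absurd this (lt_irrefl 0)
      · exact max_le hv0 (min_le_right _ _)
    have hBS := BS_le_of_le (hpos u) (hpos v) (bsPath_snd_le hd hh.le) (bsPath_snd_le hd hh.le)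
    rw [hdist, log_bsPath_snd hd hh, log_bsPath_snd hd hh, ← hcu, ← hcv,
      abs_of_nonpos (sub_nonpos.2 hu), abs_of_nonneg (sub_nonneg.2 hv)] at hBS
    have : 2 * (cv - cu) / h = 2 / h * (cv - cu) := by ring
    linarith

end BSPath

section LengthMetric

variable {Y : Type*} [MetricSpace Y] {M h : ℝ} {x y : Y × ℝ}

theorem GeodesicSpace.exists_mem_pathLengths_le (hgeo : GeodesicSpace Y) (hx : 0 < x.2)
    (hy : 0 < y.2) (hxh : x.2 ≤ h) (hyh : y.2 ≤ h) (hhM : h ≤ M) :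
    ∃ L ∈ pathLengths M x y,
      L ≤ ENNReal.ofReal (2 * log h - log x.2 - log y.2 + 2 * dist x.1 y.1 / h) := by
  obtain ⟨α, hα0, hαd, hα⟩ := hgeo x.1 y.1
  have hd : 0 ≤ dist x.1 y.1 := dist_nonneg
  have hh : 0 < h := hx.trans_le hxh
  have hαc : ContinuousOn α (Icc 0 (dist x.1 y.1)) :=
    (LipschitzOnWith.of_dist_le_mul fun s hs t ht => by
      rw [hα s hs t ht, NNReal.coe_one, one_mul, Real.dist_eq]).continuousOn
  set a := log x.2 - log h
  set b := dist x.1 y.1 + (log h - log y.2)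
  have ha : a ≤ 0 := sub_nonpos.2 (log_le_log hx hxh)
  have hb : dist x.1 y.1 ≤ b := le_add_of_nonneg_right (sub_nonneg.2 (log_le_log hy hyh))
  have hγa : bsPath hd α h a = x := by
    rw [bsPath_of_nonpos hd ha, hα0, exp_sub, exp_log hx, exp_log hh, mul_div_cancel₀ _ hh.ne']
  have hγb : bsPath hd α h b = y := by
    rw [bsPath_of_le hd hb, hαd, show dist x.1 y.1 - b = log y.2 - log h by ring, exp_sub,
      exp_log hy, exp_log hh, mul_div_cancel₀ _ hh.ne']
  refine ⟨_, ⟨a, b, bsPath hd α h, ha.trans (hd.trans hb),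
    (continuous_bsPath hd hαc).continuousOn, hγa, hγb,
    fun u _ => ⟨bsPath_snd_pos hd hh, (bsPath_snd_le hd hh.le).trans hhM⟩, rfl⟩, ?_⟩
  refine (lengthOn_Icc_le_of_le_sub _ _ ((monotone_bsPathBound hd hh).monotoneOn _)
    fun u _ v _ huv => BS_bsPath_le hd hα hh huv).trans (ENNReal.ofReal_le_ofReal (le_of_eq ?_))
  simp only [bsPathBound, projIcc_of_le_left hd ha, projIcc_of_right_le hd hb, a, b]
  ring

theorem GeodesicSpace.dLen_le (hgeo : GeodesicSpace Y) (hx : 0 < x.2) (hy : 0 < y.2)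
    (hxh : x.2 ≤ h) (hyh : y.2 ≤ h) (hhM : h ≤ M) :
    dLen M x y ≤ 2 * log h - log x.2 - log y.2 + 2 * dist x.1 y.1 / h := by
  obtain ⟨L, hL, hLB⟩ := hgeo.exists_mem_pathLengths_le hx hy hxh hyh hhM
  refine dLen_le_of_mem_pathLengths hL hLB ?_
  have := log_le_log hx hxh
  have := log_le_log hy hyh
  have : 0 ≤ 2 * dist x.1 y.1 / h := by have := hx.trans_le hxh; positivity
  linarith

theorem GeodesicSpace.BS_le_dLen (hgeo : GeodesicSpace Y) (hx : inXM M x) (hy : inXM M y) :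
    BS x y ≤ dLen M x y := by
  obtain ⟨L, hL, hLB⟩ := hgeo.exists_mem_pathLengths_le hx.1 hy.1 hx.2 hy.2 le_rfl
  exact BS_le_dLen_of_mem_pathLengths hL (ne_top_of_le_ne_top ENNReal.ofReal_ne_top hLB)

end LengthMetric

section GromovProduct

variable {Y : Type*} [MetricSpace Y] {M : ℝ} {ω x y : Y × ℝ}

theorem GeodesicSpace.gromovProd_le (hgeo : GeodesicSpace Y) {D : ℝ}
    (hD : ∀ z z' : Y, dist z z' ≤ D) (hω : inXM M ω) (hx : inXM M x) (hy : inXM M y)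
    (hxy : x.1 ≠ y.1) :
    gromovProd M ω x y ≤ 2 * log M - log ω.2 + 2 * D / M - log (dist x.1 y.1) := by
  have hM : 0 < M := hx.1.trans_le hx.2
  have hxω := hgeo.dLen_le hx.1 hω.1 hx.2 hω.2 le_rfl
  have hyω := hgeo.dLen_le hy.1 hω.1 hy.2 hω.2 le_rfl
  have hdxy := (two_mul_log_sub_le_BS hx.1 hy.1 (dist_pos.2 hxy)
    (le_add_of_nonneg_right (hx.1.le.trans (le_max_left _ _)))).trans (hgeo.BS_le_dLen hx hy)
  have := div_le_div_of_nonneg_right (mul_le_mul_of_nonneg_left (hD x.1 ω.1) zero_le_two) hM.le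
  have := div_le_div_of_nonneg_right (mul_le_mul_of_nonneg_left (hD y.1 ω.1) zero_le_two) hM.le
  rw [gromovProd]
  linarith

theorem GeodesicSpace.le_gromovProd (hgeo : GeodesicSpace Y) {h : ℝ} (hω : inXM M ω)
    (hx : inXM M x) (hy : inXM M y) (hxh : x.2 ≤ h) (hyh : y.2 ≤ h)
    (hdh : dist x.1 y.1 ≤ h) (hhM : h ≤ M) :
    log ω.2 - log h - 1 ≤ gromovProd M ω x y := by
  have hh : 0 < h := hx.1.trans_le hxh
  have hωle : ∀ z : Y × ℝ, ω.2 ≤ dist z.1 ω.1 + max z.2 ω.2 := fun z =>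
    le_add_of_nonneg_of_le dist_nonneg (le_max_right _ _)
  have hxω := (two_mul_log_sub_le_BS hx.1 hω.1 hω.1 (hωle x)).trans (hgeo.BS_le_dLen hx hω)
  have hyω := (two_mul_log_sub_le_BS hy.1 hω.1 hω.1 (hωle y)).trans (hgeo.BS_le_dLen hy hω)
  have hxy := hgeo.dLen_le hx.1 hy.1 hxh hyh hhM
  have : 2 * dist x.1 y.1 / h ≤ 2 := by
    rw [div_le_iff₀ hh]; linarith
  rw [gromovProd]
  linarith

end GromovProduct

open Filter Topology in
theorem stmt7_general {Y : Type*} [MetricSpace Y] [CompactSpace Y] (hgeo : GeodesicSpace Y)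
    {M : ℝ} (ω : Y × ℝ) (hω : inXM M ω)
    (p q : ℕ → Y) (s t : ℕ → ℝ)
    (hxmem : ∀ i, inXM M (p i, s i)) (hymem : ∀ i, inXM M (q i, t i))
    (a b : Y)
    (hs : Filter.Tendsto s Filter.atTop (nhds 0))
    (ht : Filter.Tendsto t Filter.atTop (nhds 0))
    (hp : Filter.Tendsto p Filter.atTop (nhds a))
    (hq : Filter.Tendsto q Filter.atTop (nhds b)) :
    Filter.Tendsto (fun i => gromovProd M ω (p i, s i) (q i, t i))
        Filter.atTop Filter.atTop ↔ a = b := by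
  constructor
  · intro htend
    by_contra hab
    obtain ⟨D, hD⟩ := Metric.isBounded_iff.1 (isCompact_univ (X := Y)).isBounded
    have hpq : Tendsto (fun i => dist (p i) (q i)) atTop (𝓝 (dist a b)) := hp.dist hq
    have hbound : Tendsto (fun i => 2 * log M - log ω.2 + 2 * D / M - log (dist (p i) (q i)))
        atTop (𝓝 (2 * log M - log ω.2 + 2 * D / M - log (dist a b))) :=
      tendsto_const_nhds.sub (hpq.log (dist_ne_zero.2 hab))
    refine not_tendsto_atTop_of_tendsto_nhds hbound (tendsto_atTop_mono' _ ?_ htend)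
    filter_upwards [hpq.eventually_ne (dist_ne_zero.2 hab)] with i hi
    exact hgeo.gromovProd_le (fun z z' => hD trivial trivial) hω (hxmem i) (hymem i)
      (dist_ne_zero.1 hi)
  · rintro rfl
    set r := fun i => max (dist (p i) (q i)) (max (s i) (t i))
    have hr : Tendsto r atTop (𝓝 0) := by
      simpa [r] using (hp.dist hq).max (hs.max ht)
    have hr_pos : ∀ i, 0 < r i := fun i => lt_max_of_lt_right (lt_max_of_lt_left (hxmem i).1)
    have hlog : Tendsto (fun i => log ω.2 - 1 + -log (r i)) atTop atTop :=
      tendsto_const_nhds.add_atTop (tendsto_neg_atBot_atTop.comp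
        (tendsto_log_nhdsGT_zero.comp (tendsto_nhdsWithin_iff.2 ⟨hr, .of_forall hr_pos⟩)))
    refine tendsto_atTop_mono' _ ?_ hlog
    filter_upwards [hr.eventually (eventually_le_nhds ((hxmem 0).1.trans_le (hxmem 0).2))]
      with i hi
    have := hgeo.le_gromovProd hω (hxmem i) (hymem i) (le_max_of_le_right (le_max_left _ _))
      (le_max_of_le_right (le_max_right _ _)) (le_max_left _ _) hi
    linarith

/-- for sequences `x_i = (p_i, s_i)`, `y_i = (q_i, t_i)` in `X_M`
with heights tending to `0` and `p_i → a`, `q_i → b`, the Gromov products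
`(x_i, y_i)_ω` tend to `∞` iff `a = b`. -/
theorem stmt7 {Y : Type*} [MetricSpace Y] [CompactSpace Y] (hgeo : GeodesicSpace Y)
    {M : ℝ} (hM : 0 < M) (ω : Y × ℝ) (hω : inXM M ω)
    (p q : ℕ → Y) (s t : ℕ → ℝ)
    (hxmem : ∀ i, inXM M (p i, s i)) (hymem : ∀ i, inXM M (q i, t i))
    (a b : Y)
    (hs : Filter.Tendsto s Filter.atTop (nhds 0))
    (ht : Filter.Tendsto t Filter.atTop (nhds 0))
    (hp : Filter.Tendsto p Filter.atTop (nhds a))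
    (hq : Filter.Tendsto q Filter.atTop (nhds b)) :
    Filter.Tendsto (fun i => gromovProd M ω (p i, s i) (q i, t i))
        Filter.atTop Filter.atTop ↔ a = b :=
  stmt7_general hgeo ω hω p q s t hxmem hymem a b hs ht hp hq
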